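/- In the free Ω-algebra k(X,Ω) with Ω = {≺, ≻} and the lexicographic-by-weight monomial ordering (with ≻ smaller than ≺), the set S = {(x ≻ y) ≺ z − x ≻ (y ≺ z) : x, y, z Ω-words} is a Gröbner–Shirshov basis, i.e., all inclusion compositions of elements of S are trivial modulo S. -/
import Mathlib


/-- Ω-words for Ω = {≺, ≻}: `p u v` denotes u ≺ v and `s u v` denotes u ≻ v. -/
inductive LW (X : Type) : Type
  | var : X → LW X
  | p : LW X → LW X → LW X
  | s : LW X → LW X → LW X
deriving DecidableEq

namespace LW

variable {X : Type}

/-- number of occurrences of variables, |u|_X -/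
def szX : LW X → ℕ
  | var _ => 1
  | p u v => szX u + szX v
  | s u v => szX u + szX v

/-- The weight-lexicographic ordering on Ω-words: wt(x) = (1,x),
wt(δᵢ(u₁,u₂)) = (|u|_X, δᵢ, u₁, u₂) with ≻ < ≺, compared lexicographically. -/
inductive LLt [LinearOrder X] : LW X → LW X → Prop
  | size {u v : LW X} : szX u < szX v → LLt u v
  | var {x y : X} : x < y → LLt (var x) (var y)
  | sp {u1 u2 v1 v2 : LW X} : szX (s u1 u2) = szX (p v1 v2) → LLt (s u1 u2) (p v1 v2)
  | s1 {u1 u2 v1 v2 : LW X} : szX (s u1 u2) = szX (s v1 v2) → LLt u1 v1 →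
      LLt (s u1 u2) (s v1 v2)
  | s2 {u1 u2 v2 : LW X} : szX (s u1 u2) = szX (s u1 v2) → LLt u2 v2 →
      LLt (s u1 u2) (s u1 v2)
  | p1 {u1 u2 v1 v2 : LW X} : szX (p u1 u2) = szX (p v1 v2) → LLt u1 v1 →
      LLt (p u1 u2) (p v1 v2)
  | p2 {u1 u2 v2 : LW X} : szX (p u1 u2) = szX (p u1 v2) → LLt u2 v2 →
      LLt (p u1 u2) (p u1 v2)

/-- Normal words: x ∈ X is normal; v ≻ w is normal if v, w are; v ≺ w is normal
if v, w are normal and v is not of the form v₁ ≻ v₂. -/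
inductive Normal : LW X → Prop
  | var {x : X} : Normal (var x)
  | suc {u v : LW X} : Normal u → Normal v → Normal (s u v)
  | pre {u v : LW X} : Normal u → Normal v → (∀ a b, u ≠ s a b) → Normal (p u v)

end LW

/-- A ⋆-Ω-word for Ω = {≺,≻}. -/
inductive LCtx (X : Type) : Type
  | hole : LCtx X
  | pL : LCtx X → LW X → LCtx X
  | pR : LW X → LCtx X → LCtx X
  | sL : LCtx X → LW X → LCtx X
  | sR : LW X → LCtx X → LCtx X

/-- Substitution of an Ω-word for ⋆ in a ⋆-Ω-word. -/
def LCtx.subst {X : Type} : LCtx X → LW X → LW X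
  | .hole, u => u
  | .pL c w, u => .p (c.subst u) w
  | .pR w c, u => .p w (c.subst u)
  | .sL c w, u => .s (c.subst u) w
  | .sR w c, u => .s w (c.subst u)
section

variable {X k : Type} [Field k] [LinearOrder X]

/-- The free Ω-algebra k(X,Ω), Ω = {≺,≻}. -/
abbrev LPoly (X k : Type) [Field k] := LW X →₀ k

/-- The s-Ω-word u|_s, extended linearly. -/
noncomputable def applyC (c : LCtx X) (f : LPoly X k) : LPoly X k :=
  Finsupp.mapDomain c.subst f

/-- `IsLw f w`: w is the leading Ω-word of f for the weight-lexicographic order. -/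
def IsLw (f : LPoly X k) (w : LW X) : Prop :=
  w ∈ f.support ∧ ∀ v ∈ f.support, v ≠ w → LW.LLt v w

/-- h is trivial modulo (S, w). -/
def TrivMod (S : Set (LPoly X k)) (w : LW X) (h : LPoly X k) : Prop :=
  ∃ (n : ℕ) (α : Fin n → k) (c : Fin n → LCtx X) (s : Fin n → LPoly X k),
    (∀ i, s i ∈ S) ∧ h = ∑ i, α i • applyC (c i) (s i) ∧
    ∀ i ws, IsLw (s i) ws → LW.LLt ((c i).subst ws) w

end

section Aux

open LW

variable {X k : Type} [Field k] [LinearOrder X]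

lemma szX_subst_eq (c : LCtx X) {u v : LW X} (h : LW.szX u = LW.szX v) :
    LW.szX (c.subst u) = LW.szX (c.subst v) := by
  induction c <;> simp [LCtx.subst, LW.szX, *]

lemma llt_subst (c : LCtx X) {u v : LW X} (hsz : LW.szX u = LW.szX v) (h : LW.LLt u v) :
    LW.LLt (c.subst u) (c.subst v) := by
  induction c with
  | hole => exact h
  | pL c w ih => exact .p1 (by simp [LCtx.subst, LW.szX, szX_subst_eq c hsz]) ih
  | pR w c ih => exact .p2 (by simp [LCtx.subst, LW.szX, szX_subst_eq c hsz]) ih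
  | sL c w ih => exact .s1 (by simp [LCtx.subst, LW.szX, szX_subst_eq c hsz]) ih
  | sR w c ih => exact .s2 (by simp [LCtx.subst, LW.szX, szX_subst_eq c hsz]) ih

lemma szX_BA (x y z : LW X) : LW.szX (LW.s x (LW.p y z)) = LW.szX (LW.p (LW.s x y) z) := by
  simp only [LW.szX]; omega

lemma llt_BA (x y z : LW X) : LW.LLt (LW.s x (LW.p y z)) (LW.p (LW.s x y) z) :=
  .sp (szX_BA x y z)

lemma not_llt_p_s {a b u v : LW X} (h : LW.szX (LW.p a b) = LW.szX (LW.s u v)) :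
    ¬ LW.LLt (LW.p a b) (LW.s u v) := by
  intro h'; cases h'; omega

lemma not_llt_AB (x y z : LW X) : ¬ LW.LLt (LW.p (LW.s x y) z) (LW.s x (LW.p y z)) :=
  not_llt_p_s (szX_BA x y z).symm

lemma AB_ne (x y z : LW X) : (LW.p (LW.s x y) z) ≠ (LW.s x (LW.p y z)) := by
  intro h; cases h

lemma lw_unique {A B w : LW X} (hne : A ≠ B) (hnlt : ¬ LW.LLt A B)
    (h : IsLw (Finsupp.single A (1:k) - Finsupp.single B 1) w) : w = A := by
  by_contra hwa
  have hw := h.1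
  rw [Finsupp.mem_support_iff, Finsupp.sub_apply, Finsupp.single_apply, Finsupp.single_apply] at hw
  have hwb : w = B := by
    by_contra hwb
    rw [if_neg (fun h => hwa h.symm), if_neg (fun h => hwb h.symm)] at hw
    simp at hw
  have hA : A ∈ (Finsupp.single A (1:k) - Finsupp.single B 1).support := by
    rw [Finsupp.mem_support_iff, Finsupp.sub_apply, Finsupp.single_apply, Finsupp.single_apply,
      if_pos rfl, if_neg (fun h => hne h.symm)]
    simp
  exact hnlt (hwb ▸ h.2 A hA (fun h => hne (h.trans hwb)))

lemma applyC_pair (c : LCtx X) (A B : LW X) :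
    applyC c (Finsupp.single A (1:k) - Finsupp.single B 1) =
      Finsupp.single (c.subst A) 1 - Finsupp.single (c.subst B) 1 := by
  unfold applyC
  rw [sub_eq_add_neg, ← Finsupp.single_neg, Finsupp.mapDomain_add,
    Finsupp.mapDomain_single, Finsupp.mapDomain_single, Finsupp.single_neg, ← sub_eq_add_neg]

lemma triv_aux (S : Set (LPoly X k))
    (A1 B1 P Q A2 B2 : LW X) (c c' : LCtx X)
    (hcA : c.subst A2 = A1) (hcB : c.subst B2 = P)
    (hc'A : c'.subst A2 = B1) (hc'B : c'.subst B2 = Q)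
    (hPS : Finsupp.single P (1:k) - Finsupp.single Q 1 ∈ S)
    (hgS : Finsupp.single A2 (1:k) - Finsupp.single B2 1 ∈ S)
    (hPA : LW.LLt P A1) (hBA : LW.LLt B1 A1)
    (hPQne : P ≠ Q) (hnPQ : ¬ LW.LLt P Q)
    (hABne : A2 ≠ B2) (hnAB : ¬ LW.LLt A2 B2) :
    TrivMod S A1 ((Finsupp.single A1 1 - Finsupp.single B1 1) -
      applyC c (Finsupp.single A2 1 - Finsupp.single B2 1)) := by
  refine ⟨2, ![1, -1], ![LCtx.hole, c'],
    ![Finsupp.single P 1 - Finsupp.single Q 1, Finsupp.single A2 1 - Finsupp.single B2 1],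
    ?_, ?_, ?_⟩
  · intro i; fin_cases i <;> simpa
  · rw [applyC_pair, hcA, hcB, Fin.sum_univ_two]
    simp only [Matrix.cons_val_zero, Matrix.cons_val_one, Matrix.head_cons, applyC_pair,
      hc'A, hc'B, one_smul, neg_smul]
    simp only [LCtx.subst]
    abel
  · intro i ws hws
    fin_cases i <;> simp only [Fin.mk_zero, Fin.mk_one, Fin.isValue, Matrix.cons_val_zero, Matrix.cons_val_one, Matrix.head_cons] at hws ⊢
    · rw [lw_unique hPQne hnPQ hws]
      exact hPA
    · rw [lw_unique hABne hnAB hws, hc'A]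
      exact hBA

end Aux

/-- in k(X,Ω) with Ω = {≺,≻} and the weight-lexicographic monomial
ordering (≻ < ≺), the set S = {(x≻y)≺z − x≻(y≺z)} is a Gröbner–Shirshov basis:
every inclusion composition of elements of S is trivial modulo S. -/
theorem entanglement_isGSB (X k : Type) [Field k] [LinearOrder X] [WellFoundedLT X] :
    ∀ f ∈ {h : LPoly X k | ∃ x y z : LW X,
        h = Finsupp.single (.p (.s x y) z) (1 : k) - Finsupp.single (.s x (.p y z)) (1 : k)},
    ∀ g ∈ {h : LPoly X k | ∃ x y z : LW X,
        h = Finsupp.single (.p (.s x y) z) (1 : k) - Finsupp.single (.s x (.p y z)) (1 : k)},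
    ∀ (c : LCtx X) (wf wg : LW X), IsLw f wf → IsLw g wg → wf = c.subst wg →
      TrivMod {h : LPoly X k | ∃ x y z : LW X,
          h = Finsupp.single (.p (.s x y) z) (1 : k) - Finsupp.single (.s x (.p y z)) (1 : k)}
        wf (f - applyC c g) := by
  rintro f ⟨x1, y1, z1, rfl⟩ g ⟨x2, y2, z2, rfl⟩ c wf wg hwf hwg heq
  have hwf' : wf = LW.p (LW.s x1 y1) z1 :=
    lw_unique (AB_ne x1 y1 z1) (not_llt_AB x1 y1 z1) hwf
  have hwg' : wg = LW.p (LW.s x2 y2) z2 :=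
    lw_unique (AB_ne x2 y2 z2) (not_llt_AB x2 y2 z2) hwg
  subst hwf' hwg'
  have hBA2 : LW.LLt (LW.s x2 (LW.p y2 z2)) (LW.p (LW.s x2 y2) z2) := llt_BA x2 y2 z2
  have hsz2 : LW.szX (LW.s x2 (LW.p y2 z2)) = LW.szX (LW.p (LW.s x2 y2) z2) := szX_BA x2 y2 z2
  cases c with
  | hole =>
    simp only [LCtx.subst] at heq
    injection heq with h1 h2
    injection h1 with hx hy
    subst hx hy h2
    refine ⟨0, Fin.elim0, Fin.elim0, Fin.elim0, fun i => i.elim0, ?_, fun i => i.elim0⟩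
    simp [applyC_pair, LCtx.subst]
  | pL c1 w =>
    simp only [LCtx.subst] at heq
    injection heq with h1 h2
    subst h2
    cases c1 with
    | hole => simp only [LCtx.subst] at h1; exact absurd h1 (by simp)
    | pL d w2 => simp only [LCtx.subst] at h1; exact absurd h1 (by simp)
    | pR w2 d => simp only [LCtx.subst] at h1; exact absurd h1 (by simp)
    | sL d w2 =>
      simp only [LCtx.subst] at h1
      injection h1 with hx hy
      subst hx hy
      exact triv_aux _ _ _
        (LW.p (LW.s (d.subst (LW.s x2 (LW.p y2 z2))) y1) z1)
        (LW.s (d.subst (LW.s x2 (LW.p y2 z2))) (LW.p y1 z1)) _ _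
        _ (LCtx.sL d (LW.p y1 z1)) rfl rfl rfl rfl
        ⟨_, _, _, rfl⟩ ⟨_, _, _, rfl⟩
        (.p1 (by simp only [LW.szX, szX_subst_eq d hsz2])
          (.s1 (by simp only [LW.szX, szX_subst_eq d hsz2]) (llt_subst d hsz2 hBA2)))
        (llt_BA _ _ _) (AB_ne _ _ _) (not_llt_AB _ _ _) (AB_ne _ _ _) (not_llt_AB _ _ _)
    | sR w2 d =>
      simp only [LCtx.subst] at h1
      injection h1 with hx hy
      subst hx hy
      exact triv_aux _ _ _
        (LW.p (LW.s x1 (d.subst (LW.s x2 (LW.p y2 z2)))) z1)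
        (LW.s x1 (LW.p (d.subst (LW.s x2 (LW.p y2 z2))) z1)) _ _
        _ (LCtx.sR x1 (LCtx.pL d z1)) rfl rfl rfl rfl
        ⟨_, _, _, rfl⟩ ⟨_, _, _, rfl⟩
        (.p1 (by simp only [LW.szX, szX_subst_eq d hsz2])
          (.s2 (by simp only [LW.szX, szX_subst_eq d hsz2]) (llt_subst d hsz2 hBA2)))
        (llt_BA _ _ _) (AB_ne _ _ _) (not_llt_AB _ _ _) (AB_ne _ _ _) (not_llt_AB _ _ _)
  | pR w c1 =>
    simp only [LCtx.subst] at heq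
    injection heq with h1 h2
    subst h1 h2
    exact triv_aux _ _ _
      (LW.p (LW.s x1 y1) (c1.subst (LW.s x2 (LW.p y2 z2))))
      (LW.s x1 (LW.p y1 (c1.subst (LW.s x2 (LW.p y2 z2))))) _ _
      _ (LCtx.sR x1 (LCtx.pR y1 c1)) rfl rfl rfl rfl
      ⟨_, _, _, rfl⟩ ⟨_, _, _, rfl⟩
      (.p2 (by simp only [LW.szX, szX_subst_eq c1 hsz2]) (llt_subst c1 hsz2 hBA2))
      (llt_BA _ _ _) (AB_ne _ _ _) (not_llt_AB _ _ _) (AB_ne _ _ _) (not_llt_AB _ _ _)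
  | sL c1 w => simp only [LCtx.subst] at heq; exact absurd heq (by simp)
  | sR w c1 => simp only [LCtx.subst] at heq; exact absurd heq (by simp)
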